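/- Let G be a finite nonempty signed graph and let μ₁ be the smallest eigenvalue of the twisted Laplacian Δ^τ. Then μ₁ ≤ ψ̃(G) ≤ 2 ψ(G). -/

import Mathlib

open scoped Classical
open Matrix

noncomputable section

namespace SignedPaper

variable {V : Type*}

/-- The twisted Laplacian `Δ^τ` of a signed graph: `(Δ^τ f)(x) = d(x) f(x) - ∑_{y ∈ N(x)} sgn(x,y) f(y)`. -/
def twistedLaplacian [Fintype V] [DecidableEq V] (G : SimpleGraph V) [DecidableRel G.Adj]
    (sgn : Sym2 V → ℝ) : Matrix V V ℝ :=
  Matrix.of fun x y =>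
    if x = y then (G.degree x : ℝ) else if G.Adj x y then - sgn s(x, y) else 0

/-- The sign function takes values ±1 on every edge. -/
def IsSigning (G : SimpleGraph V) (sgn : Sym2 V → ℝ) : Prop :=
  ∀ e ∈ G.edgeSet, sgn e = 1 ∨ sgn e = -1

/-- A signed graph is coherently signed if every cycle has sign +1. -/
def IsCoherent (G : SimpleGraph V) (sgn : Sym2 V → ℝ) : Prop :=
  ∀ (v : V) (c : G.Walk v v), c.IsCycle → (c.edges.map sgn).prod = 1

/-- The subgraph induced on a vertex subset `S`, viewed as a graph on `V`. -/
def inducedOn (G : SimpleGraph V) (S : Set V) : SimpleGraph V where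
  Adj x y := G.Adj x y ∧ x ∈ S ∧ y ∈ S
  symm := ⟨fun x y h => ⟨h.1.symm, h.2.2, h.2.1⟩⟩
  loopless := ⟨fun x h => G.loopless.irrefl x h.1⟩

/-- `e_mc(S)`: the minimal number of edges to delete from the induced subgraph on `S`
so that the result is coherently signed. -/
def emc (G : SimpleGraph V) (sgn : Sym2 V → ℝ) (S : Set V) : ℕ :=
  sInf {n : ℕ | ∃ F : Finset (Sym2 V), F.card = n ∧ ↑F ⊆ (inducedOn G S).edgeSet ∧
    IsCoherent ((inducedOn G S).deleteEdges ↑F) sgn}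

/-- `∂S`: the set of edges with exactly one endpoint in `S`. -/
def edgeBoundary [Fintype V] [DecidableEq V] (G : SimpleGraph V) (S : Set V) :
    Finset (Sym2 V) :=
  Finset.univ.filter fun e : Sym2 V => e ∈ G.edgeSet ∧ ∃ x y, e = s(x, y) ∧ x ∈ S ∧ y ∉ S

/-- `ψ(S) = (|∂S| + 2 e_mc(S)) / |S|`. -/
def psiSet [Fintype V] [DecidableEq V] (G : SimpleGraph V) (sgn : Sym2 V → ℝ)
    (S : Finset V) : ℝ :=
  ((edgeBoundary G ↑S).card + 2 * emc G sgn ↑S) / S.card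

/-- `ψ(G) = min_{∅ ≠ S ⊆ V} ψ(S)`. -/
def psi [Fintype V] [DecidableEq V] (G : SimpleGraph V) (sgn : Sym2 V → ℝ) : ℝ :=
  sInf {x : ℝ | ∃ S : Finset V, S.Nonempty ∧ x = psiSet G sgn S}

/-- `ψ̃(G) = min_{∅ ≠ S ⊆ V} (|∂S| + 4 e_mc(S)) / |S|`. -/
def psiTilde [Fintype V] [DecidableEq V] (G : SimpleGraph V) (sgn : Sym2 V → ℝ) : ℝ :=
  sInf {x : ℝ | ∃ S : Finset V, S.Nonempty ∧
    x = ((edgeBoundary G ↑S).card + 4 * emc G sgn ↑S) / S.card}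

/-- `h(S) = min_{∅ ≠ T ⊆ S} |∂T| / |T|`. -/
def hConst [Fintype V] [DecidableEq V] (G : SimpleGraph V) (S : Finset V) : ℝ :=
  sInf {x : ℝ | ∃ T : Finset V, T ⊆ S ∧ T.Nonempty ∧ x = (edgeBoundary G ↑T).card / T.card}

/-- The signed adjacency matrix `A^τ`. -/
def signedAdjMatrix [Fintype V] (G : SimpleGraph V) [DecidableRel G.Adj]
    (sgn : Sym2 V → ℝ) : Matrix V V ℝ :=
  Matrix.of fun x y => if G.Adj x y then sgn s(x, y) else 0

/-! Fix a nonempty `S` and a minimum set `F` of `e_mc(S)` edges of the signed graph induced on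
`S` whose deletion makes it coherent. A coherent signing is switching equivalent to the
all-positive one: `sgn(xy) = τ x τ y` on the remaining edges, where `τ x = ±1` is the sign of a
walk from a fixed root of the component of `x` to `x` (well defined because every closed walk has
sign `+1`). The test function `f = τ · 1_S` has `‖f‖² = |S|`, and in
`⟨f, Δ^τ f⟩ = ∑_{xy ∈ E} (f x - sgn(xy) f y)²` the kept edges inside `S` contribute `0`, the
deleted ones at most `4` and the boundary edges `1`; the Rayleigh bound `μ₁ ‖f‖² ≤ ⟨f, Δ^τ f⟩`
gives `μ₁ |S| ≤ |∂S| + 4 e_mc(S)`. The second inequality holds set by set, since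
`|∂S| + 4 e ≤ 2 (|∂S| + 2 e)`. -/

open SimpleGraph

section WalkSign

variable {H : SimpleGraph V} {sgn : Sym2 V → ℝ} {u v w : V}

def walkSign (sgn : Sym2 V → ℝ) (p : H.Walk u v) : ℝ := (p.edges.map sgn).prod

@[simp] lemma walkSign_nil : walkSign sgn (Walk.nil : H.Walk u u) = 1 := rfl

@[simp] lemma walkSign_cons (h : H.Adj u v) (p : H.Walk v w) :
    walkSign sgn (p.cons h) = sgn s(u, v) * walkSign sgn p := by
  simp [walkSign]

@[simp] lemma walkSign_append (p : H.Walk u v) (q : H.Walk v w) :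
    walkSign sgn (p.append q) = walkSign sgn p * walkSign sgn q := by
  simp [walkSign]

@[simp] lemma walkSign_reverse (p : H.Walk u v) : walkSign sgn p.reverse = walkSign sgn p := by
  simp [walkSign, List.prod_reverse]

@[simp] lemma walkSign_copy {u' v' : V} (p : H.Walk u v) (hu : u = u') (hv : v = v') :
    walkSign sgn (p.copy hu hv) = walkSign sgn p := by
  simp [walkSign]

lemma IsSigning.mono {G : SimpleGraph V} (hsgn : IsSigning G sgn) (hHG : H ≤ G) :
    IsSigning H sgn :=
  fun e he => hsgn e (edgeSet_mono hHG he)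

lemma IsSigning.mul_self_eq_one (hsgn : IsSigning H sgn) (h : H.Adj u v) :
    sgn s(u, v) * sgn s(u, v) = 1 :=
  mul_self_eq_one_iff.mpr (hsgn _ h)

lemma IsSigning.walkSign_mul_self (hsgn : IsSigning H sgn) (p : H.Walk u v) :
    walkSign sgn p * walkSign sgn p = 1 := by
  induction p with
  | nil => simp
  | cons h p ih =>
    rw [walkSign_cons]
    linear_combination (walkSign sgn p) ^ 2 * hsgn.mul_self_eq_one h + ih

/-- Coherence is assumed for cycles only; it propagates to all closed walks because a closed
walk that is not a cycle either backtracks along a single edge or splits into two shorter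
closed walks. -/
theorem IsCoherent.walkSign_eq_one (hco : IsCoherent H sgn) (hsgn : IsSigning H sgn)
    (c : H.Walk v v) : walkSign sgn c = 1 := by
  induction hn : c.length using Nat.strong_induction_on generalizing v with
  | _ n ih =>
  cases c with
  | nil => rfl
  | @cons _ x _ h q =>
    by_cases hq : q.IsPath
    · by_cases he : s(v, x) ∈ q.edges
      · rw [hq.eq_adj_toWalk_of_mem_edges (Sym2.eq_swap ▸ he)]
        simpa [Sym2.eq_swap] using hsgn.mul_self_eq_one h
      · exact hco v _ ((Walk.cons_isCycle_iff q h).mpr ⟨hq, he⟩)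
    · obtain ⟨u, c', ⟨r₁, r₂, rfl⟩, hc'⟩ : ∃ u, ∃ c' : H.Walk u u, c'.IsSubwalk q ∧ ¬ c'.Nil := by
        simpa using mt Walk.isPath_iff_isSubwalk_imp_nil.mpr hq
      have hlen := Walk.not_nil_iff_lt_length.mp hc'
      simp only [Walk.length_cons, Walk.length_append] at hn
      have h₁ := ih c'.length (by omega) c' rfl
      have h₂ := ih _ (by simp only [Walk.length_cons, Walk.length_append]; omega)
        (Walk.cons h (r₁.append r₂)) rfl
      simp only [walkSign_cons, walkSign_append] at h₁ h₂ ⊢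
      linear_combination (sgn s(v, x) * walkSign sgn r₁ * walkSign sgn r₂) * h₁ + h₂

theorem IsCoherent.exists_switching (hco : IsCoherent H sgn) (hsgn : IsSigning H sgn) :
    ∃ τ : V → ℝ, (∀ x, τ x = 1 ∨ τ x = -1) ∧
      ∀ ⦃x y : V⦄, H.Adj x y → sgn s(x, y) = τ x * τ y := by
  let root (x : V) : V := (H.connectedComponentMk x).out
  have p (x : V) : H.Walk (root x) x := (ConnectedComponent.exact (Quot.out_eq _)).some
  have sign_sq (x : V) := hsgn.walkSign_mul_self (p x)
  refine ⟨fun x => walkSign sgn (p x), fun x => mul_self_eq_one_iff.mp (sign_sq x), ?_⟩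
  intro x y hxy
  have hroot : root y = root x := by
    simp only [root, ConnectedComponent.connectedComponentMk_eq_of_adj hxy]
  have hloop := hco.walkSign_eq_one hsgn
    ((p x).append (Walk.cons hxy ((p y).copy hroot rfl).reverse))
  simp only [walkSign_append, walkSign_cons, walkSign_reverse, walkSign_copy] at hloop
  linear_combination (walkSign sgn (p x) * walkSign sgn (p y)) * hloop
    - sgn s(x, y) * walkSign sgn (p x) ^ 2 * sign_sq y - sgn s(x, y) * sign_sq x

end WalkSign

section Laplacian

variable [Fintype V] [DecidableEq V] (G : SimpleGraph V) [DecidableRel G.Adj] (sgn : Sym2 V → ℝ)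

lemma twistedLaplacian_isHermitian : (twistedLaplacian G sgn).IsHermitian := by
  ext x y
  by_cases h : x = y
  · subst h; rfl
  · simp [twistedLaplacian, h, Ne.symm h, G.adj_comm, Sym2.eq_swap]

lemma twistedLaplacian_mulVec_apply (f : V → ℝ) (x : V) :
    (twistedLaplacian G sgn *ᵥ f) x = ∑ y, if G.Adj x y then f x - sgn s(x, y) * f y else 0 := by
  have hL (y : V) : twistedLaplacian G sgn x y =
      (if x = y then (G.degree x : ℝ) else 0) + if G.Adj x y then -sgn s(x, y) else 0 := by
    by_cases h : x = y
    · subst h; simp [twistedLaplacian]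
    · simp [twistedLaplacian, h]
  simp only [mulVec, dotProduct, hL, add_mul, Finset.sum_add_distrib, ite_mul, zero_mul,
    Finset.sum_ite_eq, Finset.mem_univ, if_true]
  rw [G.degree_eq_sum_if_adj (R := ℝ), Finset.sum_mul, ← Finset.sum_add_distrib]
  refine Finset.sum_congr rfl fun y _ => ?_
  split_ifs <;> ring

lemma dotProduct_twistedLaplacian_mulVec (f : V → ℝ) :
    f ⬝ᵥ (twistedLaplacian G sgn *ᵥ f) =
      ∑ x, ∑ y, if G.Adj x y then f x * f x - sgn s(x, y) * f x * f y else 0 := by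
  simp only [dotProduct, twistedLaplacian_mulVec_apply, Finset.mul_sum, mul_ite, mul_zero]
  refine Finset.sum_congr rfl fun x _ => Finset.sum_congr rfl fun y _ => ?_
  split_ifs <;> ring

lemma two_mul_dotProduct_twistedLaplacian_mulVec {sgn : Sym2 V → ℝ} (hsgn : IsSigning G sgn)
    (f : V → ℝ) :
    2 * (f ⬝ᵥ (twistedLaplacian G sgn *ᵥ f)) =
      ∑ x, ∑ y, if G.Adj x y then (f x - sgn s(x, y) * f y) ^ 2 else 0 := by
  rw [two_mul, dotProduct_twistedLaplacian_mulVec]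
  conv_lhs => enter [2]; rw [Finset.sum_comm]
  rw [← Finset.sum_add_distrib]
  refine Finset.sum_congr rfl fun x _ => ?_
  rw [← Finset.sum_add_distrib]
  refine Finset.sum_congr rfl fun y _ => ?_
  by_cases hxy : G.Adj x y
  · rw [if_pos hxy, if_pos hxy.symm, if_pos hxy, Sym2.eq_swap (a := y)]
    linear_combination -(f y ^ 2) * hsgn.mul_self_eq_one hxy
  · simp [hxy, mt G.adj_symm hxy]

lemma sum_sum_ite_adj_eq_two_mul_sum_edgeFinset (b : Sym2 V → ℝ) :
    ∑ x, ∑ y, (if G.Adj x y then b s(x, y) else 0) = 2 * ∑ e ∈ G.edgeFinset, b e := by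
  calc ∑ x, ∑ y, (if G.Adj x y then b s(x, y) else 0) = ∑ d : G.Dart, b d.edge := by
        rw [← Finset.sum_product', ← Finset.sum_filter]
        exact Finset.sum_bij' (fun p hp => ⟨p, (Finset.mem_filter.mp hp).2⟩) (fun d _ => d.toProd)
          (fun _ _ => Finset.mem_univ _) (fun d _ => by simp [d.adj]) (fun _ _ => by simp)
          (fun _ _ => by simp) (fun _ _ => by simp)
    _ = ∑ e ∈ G.edgeFinset, ∑ d : G.Dart with d.edge = e, b d.edge := by
        rw [Finset.sum_fiberwise_of_maps_to (fun d _ => by simp)]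
    _ = 2 * ∑ e ∈ G.edgeFinset, b e := by
        rw [Finset.mul_sum]
        refine Finset.sum_congr rfl fun e he => ?_
        rw [Finset.sum_congr rfl fun d hd => by rw [(Finset.mem_filter.mp hd).2],
          Finset.sum_const, G.dart_edge_fiber_card e (G.mem_edgeFinset.mp he), nsmul_eq_mul]
        norm_num

end Laplacian

lemma _root_.Matrix.IsHermitian.mul_dotProduct_self_le {n : Type*} [Fintype n] [DecidableEq n]
    {A : Matrix n n ℝ} (hA : A.IsHermitian) {c : ℝ} (hc : ∀ μ ∈ spectrum ℝ A, c ≤ μ)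
    (f : n → ℝ) : c * (f ⬝ᵥ f) ≤ f ⬝ᵥ (A *ᵥ f) := by
  have hpsd : (A - algebraMap ℝ _ c).PosSemidef := by
    refine posSemidef_iff_isHermitian_and_spectrum_nonneg.mpr ⟨hA.sub (isHermitian_diagonal _), ?_⟩
    rw [← spectrum.sub_singleton_eq]
    rintro _ ⟨μ, hμ, c, rfl, rfl⟩
    simpa using hc μ hμ
  simpa [sub_mulVec, Algebra.algebraMap_eq_smul_one, smul_mulVec] using
    hpsd.dotProduct_mulVec_nonneg f

lemma inducedOn_le (G : SimpleGraph V) (S : Set V) : inducedOn G S ≤ G := fun _ _ h => h.1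

lemma isCoherent_bot (sgn : Sym2 V → ℝ) : IsCoherent (⊥ : SimpleGraph V) sgn := by
  intro v c hc
  cases c with
  | nil => exact absurd rfl hc.ne_nil
  | cons h _ => exact h.elim

lemma exists_card_eq_emc [Finite V] (G : SimpleGraph V) (sgn : Sym2 V → ℝ) (S : Set V) :
    ∃ F : Finset (Sym2 V), F.card = emc G sgn S ∧ ↑F ⊆ (inducedOn G S).edgeSet ∧
      IsCoherent ((inducedOn G S).deleteEdges ↑F) sgn := by
  let deletionSizes : Set ℕ := {n | ∃ F : Finset (Sym2 V), F.card = n ∧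
    ↑F ⊆ (inducedOn G S).edgeSet ∧ IsCoherent ((inducedOn G S).deleteEdges ↑F) sgn}
  have hne : deletionSizes.Nonempty := ⟨_, (inducedOn G S).edgeSet.toFinite.toFinset, rfl,
    by simp, by simpa using isCoherent_bot sgn⟩
  exact Nat.sInf_mem hne

section Cut

variable [Fintype V] [DecidableEq V] (G : SimpleGraph V)

lemma mk_mem_edgeBoundary {S : Set V} {x y : V} (h : G.Adj x y) (hx : x ∈ S) (hy : y ∉ S) :
    s(x, y) ∈ edgeBoundary G S := by
  simp only [edgeBoundary, Finset.mem_filter]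
  exact ⟨Finset.mem_univ _, h, x, y, rfl, hx, hy⟩

variable {sgn : Sym2 V → ℝ}

lemma sq_indicator_sub_mul_indicator_le (hsgn : IsSigning G sgn) {S : Finset V}
    {F : Finset (Sym2 V)} {τ : V → ℝ} (hτ : ∀ x, τ x = 1 ∨ τ x = -1)
    (hτsgn : ∀ ⦃x y⦄, ((inducedOn G S).deleteEdges F).Adj x y → sgn s(x, y) = τ x * τ y)
    {x y : V} (hxy : G.Adj x y) :
    ((S : Set V).indicator τ x - sgn s(x, y) * (S : Set V).indicator τ y) ^ 2 ≤
      (if s(x, y) ∈ F then 4 else 0) + (if s(x, y) ∈ edgeBoundary G S then 1 else 0) := by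
  set f := (S : Set V).indicator τ
  have hτ_sq (z : V) : τ z * τ z = 1 := mul_self_eq_one_iff.mpr (hτ z)
  have hf_sq (z : V) : f z ^ 2 ≤ 1 := by
    by_cases hz : z ∈ S <;> simp [f, hz, sq, hτ_sq]
  have hs_sq := hsgn.mul_self_eq_one hxy
  have hB : (0 : ℝ) ≤ if s(x, y) ∈ edgeBoundary G S then 1 else 0 := by positivity
  by_cases hF : s(x, y) ∈ F
  · rw [if_pos hF]
    nlinarith [hf_sq x, hf_sq y, sq_nonneg (f x + sgn s(x, y) * f y)]
  rw [if_neg hF, zero_add]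
  by_cases hx : x ∈ S <;> by_cases hy : y ∈ S
  · have hH : ((inducedOn G S).deleteEdges F).Adj x y :=
      (deleteEdges_adj ..).mpr ⟨⟨hxy, hx, hy⟩, hF⟩
    have hzero : f x - sgn s(x, y) * f y = 0 := by
      simp only [f, Set.indicator_of_mem hx, Set.indicator_of_mem hy, hτsgn hH]
      linear_combination -τ x * hτ_sq y
    simpa [hzero] using hB
  · rw [if_pos (mk_mem_edgeBoundary G hxy hx hy)]
    simp [f, hx, hy, sq, hτ_sq]
  · rw [Sym2.eq_swap, if_pos (mk_mem_edgeBoundary G hxy.symm hy hx), ← Sym2.eq_swap]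
    simp only [f, Set.indicator_of_notMem hx, Set.indicator_of_mem hy]
    exact le_of_eq (by linear_combination (τ y * τ y) * hs_sq + hτ_sq y)
  · simpa [f, hx, hy] using hB

variable [DecidableRel G.Adj]

lemma edgeBoundary_subset_edgeFinset (S : Set V) : edgeBoundary G S ⊆ G.edgeFinset := by
  intro e he
  simp only [edgeBoundary, Finset.mem_filter] at he
  exact G.mem_edgeFinset.mpr he.2.1

end Cut

theorem mul_card_le_card_edgeBoundary_add_four_mul_emc [Fintype V] [DecidableEq V]
    (G : SimpleGraph V) [DecidableRel G.Adj] {sgn : Sym2 V → ℝ} (hsgn : IsSigning G sgn)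
    {c : ℝ} (hc : ∀ μ ∈ spectrum ℝ (twistedLaplacian G sgn), c ≤ μ) (S : Finset V) :
    c * S.card ≤ (edgeBoundary G S).card + 4 * emc G sgn S := by
  obtain ⟨F, hF_card, hF_sub, hF_coh⟩ := exists_card_eq_emc G sgn S
  obtain ⟨τ, hτ, hτsgn⟩ :=
    hF_coh.exists_switching (hsgn.mono ((deleteEdges_le _).trans (inducedOn_le G _)))
  have hF : F ⊆ G.edgeFinset := fun e he => by
    simpa using edgeSet_mono (inducedOn_le G S) (hF_sub he)
  set f := (S : Set V).indicator τ
  have hf_norm : f ⬝ᵥ f = S.card := by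
    rw [dotProduct, ← Finset.sum_subset S.subset_univ fun z _ hz => by simp [f, hz],
      Finset.card_eq_sum_ones, Nat.cast_sum, Nat.cast_one]
    refine Finset.sum_congr rfl fun z hz => ?_
    rw [show f z = τ z from Set.indicator_of_mem (Finset.mem_coe.mpr hz) τ]
    exact mul_self_eq_one_iff.mpr (hτ z)
  let b (e : Sym2 V) : ℝ := (if e ∈ F then 4 else 0) + (if e ∈ edgeBoundary G S then 1 else 0)
  calc c * S.card = c * (f ⬝ᵥ f) := by rw [hf_norm]
    _ ≤ f ⬝ᵥ (twistedLaplacian G sgn *ᵥ f) :=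
        (twistedLaplacian_isHermitian G sgn).mul_dotProduct_self_le hc f
    _ = (∑ x, ∑ y, if G.Adj x y then (f x - sgn s(x, y) * f y) ^ 2 else 0) / 2 := by
        rw [← two_mul_dotProduct_twistedLaplacian_mulVec G hsgn]
        ring
    _ ≤ (∑ x, ∑ y, if G.Adj x y then b s(x, y) else 0) / 2 := by
        gcongr with x _ y _
        split_ifs with hxy
        · exact sq_indicator_sub_mul_indicator_le G hsgn hτ hτsgn hxy
        · rfl
    _ = ∑ e ∈ G.edgeFinset, b e := by
        rw [sum_sum_ite_adj_eq_two_mul_sum_edgeFinset]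
        ring
    _ = (edgeBoundary G S).card + 4 * emc G sgn S := by
        simp only [b, Finset.sum_add_distrib, Finset.sum_ite_mem, Finset.inter_eq_right.mpr hF,
          Finset.inter_eq_right.mpr (edgeBoundary_subset_edgeFinset G _), Finset.sum_const,
          nsmul_eq_mul, hF_card]
        ring

section FiniteInf

variable {ι : Type*} [Finite ι] {p : ι → Prop}

lemma finite_setOf_exists_eq (g : ι → ℝ) : {x | ∃ i, p i ∧ x = g i}.Finite :=
  (Set.finite_range g).subset (by rintro _ ⟨j, _, rfl⟩; exact ⟨j, rfl⟩)

lemma sInf_setOf_exists_eq_le (g : ι → ℝ) {i : ι} (hi : p i) :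
    sInf {x | ∃ i, p i ∧ x = g i} ≤ g i :=
  csInf_le (finite_setOf_exists_eq g).bddBelow ⟨i, hi, rfl⟩

lemma exists_sInf_setOf_exists_eq (hp : ∃ i, p i) (g : ι → ℝ) :
    ∃ i, p i ∧ sInf {x | ∃ i, p i ∧ x = g i} = g i := by
  obtain ⟨i, hi⟩ := hp
  have hne : {x | ∃ i, p i ∧ x = g i}.Nonempty := ⟨g i, i, hi, rfl⟩
  exact hne.csInf_mem (finite_setOf_exists_eq g)

end FiniteInf

theorem mu1_le_psiTilde_le_two_psi_general [Fintype V] [DecidableEq V] [Nonempty V]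
    (G : SimpleGraph V) [DecidableRel G.Adj] (sgn : Sym2 V → ℝ) (hsgn : IsSigning G sgn)
    (mu1 : ℝ)
    (hmin : ∀ mu ∈ spectrum ℝ (twistedLaplacian G sgn), mu1 ≤ mu) :
    mu1 ≤ psiTilde G sgn ∧ psiTilde G sgn ≤ 2 * psi G sgn := by
  let psiTildeSet (S : Finset V) : ℝ :=
    ((edgeBoundary G ↑S).card + 4 * emc G sgn ↑S) / S.card
  have hne : ∃ S : Finset V, S.Nonempty := ⟨_, Finset.univ_nonempty⟩
  obtain ⟨S, hS, hS_min⟩ := exists_sInf_setOf_exists_eq hne psiTildeSet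
  obtain ⟨T, hT, hT_min⟩ := exists_sInf_setOf_exists_eq hne (psiSet G sgn)
  constructor
  · rw [psiTilde, hS_min, le_div_iff₀ (by exact_mod_cast hS.card_pos)]
    exact mul_card_le_card_edgeBoundary_add_four_mul_emc G hsgn hmin S
  · calc psiTilde G sgn ≤ psiTildeSet T := sInf_setOf_exists_eq_le psiTildeSet hT
      _ ≤ 2 * psiSet G sgn T := by
        rw [psiSet, mul_div_assoc']
        dsimp only [psiTildeSet]
        gcongr
        linarith [(edgeBoundary G ↑T).card.cast_nonneg (α := ℝ)]
      _ = 2 * psi G sgn := by rw [psi, hT_min]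

/-- The smallest eigenvalue `μ₁` of the twisted Laplacian satisfies
`μ₁ ≤ ψ̃(G) ≤ 2 ψ(G)`. -/
theorem mu1_le_psiTilde_le_two_psi [Fintype V] [DecidableEq V] [Nonempty V]
    (G : SimpleGraph V) [DecidableRel G.Adj] (sgn : Sym2 V → ℝ) (hsgn : IsSigning G sgn)
    (mu1 : ℝ)
    (hmem : mu1 ∈ spectrum ℝ (twistedLaplacian G sgn))
    (hmin : ∀ mu ∈ spectrum ℝ (twistedLaplacian G sgn), mu1 ≤ mu) :
    mu1 ≤ psiTilde G sgn ∧ psiTilde G sgn ≤ 2 * psi G sgn :=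
  mu1_le_psiTilde_le_two_psi_general G sgn hsgn mu1 hmin

end SignedPaper
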